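/- Every Ferrers board B = (b_0,...,b_n) with b_0 = 0 is m-weight file equivalent to a unique m-restricted board. Specifically, after padding B with zeros to N = |B| columns, the weakly increasing rearrangement of ω_m(B) is the m-weight root vector of an m-restricted Ferrers board. -/

import Mathlib

/-!
By the `m`-weight Factorization Theorem, the numbers `f_{k,m}(B)` are the coordinates of
`∏_j (x - ω_j)` in the basis of `m`-falling factorials, so two boards with the same number of
columns are `m`-weight file equivalent iff their root vectors `ω_j = jm - b_j` are rearrangements
of each other. The root vector of an `m`-restricted board is weakly increasing, which gives
uniqueness. For existence, right-align `B` in the columns `0, …, N` (where `N = |B|`), so that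
column `j` has height at most `j`; then `0 = ω_0 ≤ ω_j` and `ω_{j+1} ≤ ω_j + m`. Sorting keeps
both properties, and a weakly increasing vector with `ω_0 = 0` and increments at most `m` is the
root vector of an `m`-restricted board.
-/

/-- The `m`-falling factorial `x↓_{n,m} = x(x-m)(x-2m)⋯(x-(n-1)m)`. -/
def fallFact (x : ℤ) (n m : ℕ) : ℤ := ∏ i ∈ Finset.range n, (x - (m : ℤ) * i)

/-- The cells of the Ferrers board with column heights `b 0, b 1, …, b n`
(columns 0-indexed, rows 1-indexed). -/
def cells0 (b : ℕ → ℕ) (n : ℕ) : Finset (ℕ × ℕ) :=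
  ((Finset.Icc 1 ((Finset.range (n + 1)).sup b)) ×ˢ Finset.range (n + 1)).filter
    fun c => c.1 ≤ b c.2

/-- The `m`-weight of a file placement: `∏_i 1↓_{y_i,m}` where `y_i` is the number
of rooks in row `i`. -/
def wtm (m : ℕ) (F : Finset (ℕ × ℕ)) : ℤ :=
  ∏ i ∈ F.image Prod.fst, fallFact 1 ((F.filter fun c => c.1 = i).card) m

/-- `f_{k,m}(B)`: the sum of `m`-weights over all file placements (no two rooks in
the same column) of `k` rooks on the board `B = (b_0, …, b_n)`. -/
def fkm (m : ℕ) (b : ℕ → ℕ) (n k : ℕ) : ℤ :=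
  ∑ F ∈ (cells0 b n).powerset.filter
      (fun F => (∀ c ∈ F, ∀ c' ∈ F, c.2 = c'.2 → c = c') ∧ F.card = k),
    wtm m F

open Finset

theorem mem_cells0 {b : ℕ → ℕ} {n : ℕ} {p : ℕ × ℕ} :
    p ∈ cells0 b n ↔ 1 ≤ p.1 ∧ p.1 ≤ b p.2 ∧ p.2 ≤ n := by
  simp only [cells0, mem_filter, mem_product, mem_Icc, mem_range, Nat.lt_succ_iff]
  constructor
  · rintro ⟨⟨⟨h1, -⟩, h3⟩, h2⟩
    exact ⟨h1, h2, h3⟩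
  · rintro ⟨h1, h2, h3⟩
    exact ⟨⟨⟨h1, h2.trans (le_sup (f := b) (mem_range_succ_iff.2 h3))⟩, h3⟩, h2⟩

theorem cells0_zero (b : ℕ → ℕ) : cells0 b 0 = Icc 1 (b 0) ×ˢ {0} := by
  ext ⟨r, c⟩
  simp only [mem_cells0, mem_product, mem_Icc, mem_singleton]
  constructor
  · rintro ⟨h1, h2, h3⟩
    obtain rfl : c = 0 := by omega
    exact ⟨⟨h1, h2⟩, rfl⟩
  · rintro ⟨⟨h1, h2⟩, rfl⟩
    exact ⟨h1, h2, le_rfl⟩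

theorem cells0_succ (b : ℕ → ℕ) (n : ℕ) :
    cells0 b (n + 1) = cells0 b n ∪ Icc 1 (b (n + 1)) ×ˢ {n + 1} := by
  ext ⟨r, c⟩
  simp only [mem_union, mem_cells0, mem_product, mem_Icc, mem_singleton]
  constructor
  · rintro ⟨h1, h2, h3⟩
    rcases Nat.lt_or_ge c (n + 1) with h | h
    · exact Or.inl ⟨h1, h2, by omega⟩
    · obtain rfl : c = n + 1 := by omega
      exact Or.inr ⟨⟨h1, h2⟩, rfl⟩
  · rintro (⟨h1, h2, h3⟩ | ⟨⟨h1, h2⟩, rfl⟩)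
    · exact ⟨h1, h2, by omega⟩
    · exact ⟨h1, h2, le_rfl⟩

def placements (C : Finset (ℕ × ℕ)) (k : ℕ) : Finset (Finset (ℕ × ℕ)) :=
  C.powerset.filter fun F => (∀ c ∈ F, ∀ c' ∈ F, c.2 = c'.2 → c = c') ∧ F.card = k

def fkmCells (m : ℕ) (C : Finset (ℕ × ℕ)) (k : ℕ) : ℤ :=
  ∑ F ∈ placements C k, wtm m F

theorem fkm_eq_fkmCells (m : ℕ) (b : ℕ → ℕ) (n k : ℕ) :
    fkm m b n k = fkmCells m (cells0 b n) k := rfl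

theorem mem_placements {C F : Finset (ℕ × ℕ)} {k : ℕ} :
    F ∈ placements C k ↔ F ⊆ C ∧ Set.InjOn Prod.snd (F : Set (ℕ × ℕ)) ∧ F.card = k := by
  simp [placements, Set.InjOn]

theorem placements_zero (C : Finset (ℕ × ℕ)) : placements C 0 = {∅} := by
  ext F
  simp only [mem_placements, card_eq_zero, mem_singleton]
  constructor
  · exact fun h => h.2.2
  · rintro rfl
    simp

theorem placements_eq_empty {C : Finset (ℕ × ℕ)} {k : ℕ} (hk : (C.image Prod.snd).card < k) :
    placements C k = ∅ := by
  refine eq_empty_of_forall_notMem fun F hF => ?_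
  obtain ⟨hFC, hinj, rfl⟩ := mem_placements.1 hF
  have : F.card ≤ (C.image Prod.snd).card :=
    card_le_card_of_injOn Prod.snd (fun p hp => mem_image_of_mem _ (hFC hp)) hinj
  omega

theorem fkmCells_zero (m : ℕ) (C : Finset (ℕ × ℕ)) : fkmCells m C 0 = 1 := by
  simp [fkmCells, placements_zero, wtm]

theorem fkmCells_eq_zero {m : ℕ} {C : Finset (ℕ × ℕ)} {k : ℕ}
    (hk : (C.image Prod.snd).card < k) : fkmCells m C k = 0 := by
  simp [fkmCells, placements_eq_empty hk]

theorem fkm_eq_zero (m : ℕ) (b : ℕ → ℕ) {n k : ℕ} (hk : n + 1 < k) : fkm m b n k = 0 := by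
  have hcols : (cells0 b n).image Prod.snd ⊆ range (n + 1) := by
    intro c hc
    obtain ⟨p, hp, rfl⟩ := mem_image.1 hc
    exact mem_range_succ_iff.2 (mem_cells0.1 hp).2.2
  exact fkmCells_eq_zero ((card_le_card hcols).trans_lt (by simpa using hk))

theorem fallFact_succ (x : ℤ) (n m : ℕ) :
    fallFact x (n + 1) m = fallFact x n m * (x - m * n) :=
  prod_range_succ _ _

theorem wtm_eq_prod_of_subset (m : ℕ) {F : Finset (ℕ × ℕ)} {S : Finset ℕ}
    (hS : F.image Prod.fst ⊆ S) :
    wtm m F = ∏ i ∈ S, fallFact 1 (F.filter fun c => c.1 = i).card m := by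
  refine prod_subset hS fun i _ hi => ?_
  have : F.filter (fun c => c.1 = i) = ∅ :=
    filter_eq_empty_iff.2 fun p hp hpi => hi (mem_image.2 ⟨p, hp, hpi⟩)
  simp [this, fallFact]

theorem wtm_insert (m : ℕ) {G : Finset (ℕ × ℕ)} {r c : ℕ} (h : (r, c) ∉ G) :
    wtm m (insert (r, c) G) = (1 - m * (G.filter fun p => p.1 = r).card) * wtm m G := by
  set S := insert r (G.image Prod.fst)
  have hrow : ∀ i, fallFact 1 ((insert (r, c) G).filter fun p => p.1 = i).card m =
      (if r = i then 1 - (m : ℤ) * (G.filter fun p => p.1 = r).card else 1) *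
        fallFact 1 (G.filter fun p => p.1 = i).card m := by
    intro i
    rw [filter_insert]
    split_ifs with hri
    · subst hri
      rw [card_insert_of_notMem (fun hm => h (mem_filter.1 hm).1), fallFact_succ]
      ring
    · exact (one_mul _).symm
  rw [wtm_eq_prod_of_subset m (S := S) (by simp [S, image_insert]),
    wtm_eq_prod_of_subset m (S := S) (subset_insert _ _), prod_congr rfl fun i _ => hrow i,
    prod_mul_distrib, prod_ite_eq, if_pos (mem_insert_self _ _)]

section Column

variable {C : Finset (ℕ × ℕ)} {h c : ℕ}

theorem sum_wtm_insert_column (m : ℕ) {G : Finset (ℕ × ℕ)}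
    (hrow : ∀ p ∈ G, p.1 ∈ Icc 1 h) (hcol : ∀ p ∈ G, p.2 ≠ c) :
    ∑ r ∈ Icc 1 h, wtm m (insert (r, c) G) = (h - m * G.card) * wtm m G := by
  have hfib : G.card = ∑ r ∈ Icc 1 h, (G.filter fun p => p.1 = r).card :=
    card_eq_sum_card_fiberwise hrow
  rw [sum_congr rfl fun r _ => wtm_insert m fun hm => hcol _ hm rfl, ← sum_mul, sum_sub_distrib,
    ← mul_sum, hfib]
  push_cast
  simp

theorem filter_avoid_placements_union_column (hcol : ∀ p ∈ C, p.2 ≠ c) (k : ℕ) :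
    (placements (C ∪ Icc 1 h ×ˢ {c}) k).filter (fun F => ∀ p ∈ F, p.2 ≠ c) =
      placements C k := by
  ext F
  simp only [mem_filter, mem_placements]
  constructor
  · rintro ⟨⟨hFC, hinj, hcard⟩, havoid⟩
    refine ⟨fun p hp => ?_, hinj, hcard⟩
    rcases mem_union.1 (hFC hp) with hpC | hpcol
    · exact hpC
    · exact absurd (mem_singleton.1 (mem_product.1 hpcol).2) (havoid p hp)
  · rintro ⟨hFC, hinj, hcard⟩
    exact ⟨⟨hFC.trans subset_union_left, hinj, hcard⟩, fun p hp => hcol p (hFC hp)⟩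

theorem filter_meet_placements_union_column (hcol : ∀ p ∈ C, p.2 ≠ c) (k : ℕ) :
    (placements (C ∪ Icc 1 h ×ˢ {c}) (k + 1)).filter (fun F => ¬ ∀ p ∈ F, p.2 ≠ c) =
      (Icc 1 h ×ˢ placements C k).image fun q => insert (q.1, c) q.2 := by
  ext F
  simp only [mem_filter, mem_placements, mem_image, mem_product, not_forall, not_not]
  constructor
  · rintro ⟨⟨hFC, hinj, hcard⟩, p, hp, hpc⟩
    have hrest : ∀ q ∈ F.erase p, q.2 ≠ c := fun q hq hqc =>
      ne_of_mem_erase hq (hinj (mem_of_mem_erase hq) hp (hqc.trans hpc.symm))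
    have hpcol : p ∈ Icc 1 h ×ˢ {c} := by
      rcases mem_union.1 (hFC hp) with hpC | hpcol
      · exact absurd hpc (hcol p hpC)
      · exact hpcol
    refine ⟨(p.1, F.erase p), ⟨(mem_product.1 hpcol).1, fun q hq => ?_, ?_, ?_⟩, ?_⟩
    · rcases mem_union.1 (hFC (mem_of_mem_erase hq)) with hqC | hqcol
      · exact hqC
      · exact absurd (mem_singleton.1 (mem_product.1 hqcol).2) (hrest q hq)
    · exact hinj.mono (by simp)
    · rw [card_erase_of_mem hp, hcard, Nat.add_sub_cancel]
    · rw [← hpc, insert_erase hp]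
  · rintro ⟨⟨r, G⟩, ⟨hr, hGC, hinj, hcard⟩, rfl⟩
    have hrc : (r, c) ∉ G := fun hm => hcol _ (hGC hm) rfl
    refine ⟨⟨insert_subset (mem_union_right _ (mem_product.2 ⟨hr, mem_singleton_self c⟩))
      (hGC.trans subset_union_left), ?_, ?_⟩, (r, c), mem_insert_self _ _, rfl⟩
    · rw [coe_insert, Set.injOn_insert (by simpa using hrc)]
      exact ⟨hinj, fun ⟨q, hq, hqc⟩ => hcol q (hGC hq) hqc⟩
    · rw [card_insert_of_notMem hrc, hcard]

theorem injOn_insert_column (hcol : ∀ p ∈ C, p.2 ≠ c) (k : ℕ) :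
    Set.InjOn (fun q : ℕ × Finset (ℕ × ℕ) => insert (q.1, c) q.2)
      (Icc 1 h ×ˢ placements C k : Finset _) := by
  rintro ⟨r, G⟩ hG ⟨r', G'⟩ hG' heq
  simp only [coe_product, Set.mem_prod, mem_coe, mem_placements] at hG hG' heq
  have hGc : ∀ q ∈ G, q.2 ≠ c := fun q hq => hcol q (hG.2.1 hq)
  have hG'c : ∀ q ∈ G', q.2 ≠ c := fun q hq => hcol q (hG'.2.1 hq)
  have hr : r = r' := by
    have : (r, c) ∈ insert (r', c) G' := heq ▸ mem_insert_self _ _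
    rcases mem_insert.1 this with h | h
    · exact (Prod.mk.inj h).1
    · exact absurd rfl (hG'c _ h)
  subst hr
  have := congrArg (fun F => F.erase (r, c)) heq
  simp only [erase_insert (fun hm => hGc (r, c) hm rfl),
    erase_insert (fun hm => hG'c (r, c) hm rfl)] at this
  rw [this]

theorem fkmCells_union_column (m : ℕ) (hrow : ∀ p ∈ C, p.1 ∈ Icc 1 h)
    (hcol : ∀ p ∈ C, p.2 ≠ c) (k : ℕ) :
    fkmCells m (C ∪ Icc 1 h ×ˢ {c}) (k + 1) =
      fkmCells m C (k + 1) + (h - m * k) * fkmCells m C k := by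
  rw [fkmCells, ← sum_filter_add_sum_filter_not _ (fun F => ∀ p ∈ F, p.2 ≠ c),
    filter_avoid_placements_union_column hcol, filter_meet_placements_union_column hcol,
    sum_image (injOn_insert_column hcol k), sum_product_right, fkmCells, fkmCells, mul_sum]
  congr 1
  refine sum_congr rfl fun G hG => ?_
  obtain ⟨hGC, -, rfl⟩ := mem_placements.1 hG
  exact sum_wtm_insert_column m (fun p hp => hrow p (hGC hp)) fun p hp => hcol p (hGC hp)

end Column

theorem fkm_succ_succ (m : ℕ) {b : ℕ → ℕ} {n : ℕ} (hb : MonotoneOn b (Set.Iic (n + 1)))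
    (k : ℕ) : fkm m b (n + 1) (k + 1) = fkm m b n (k + 1) + (b (n + 1) - m * k) * fkm m b n k := by
  rw [fkm_eq_fkmCells, cells0_succ, fkmCells_union_column m]
  · rfl
  · intro p hp
    obtain ⟨h1, h2, h3⟩ := mem_cells0.1 hp
    exact mem_Icc.2 ⟨h1, h2.trans (hb (Set.mem_Iic.2 (by omega)) Set.self_mem_Iic (by omega))⟩
  · intro p hp
    have := (mem_cells0.1 hp).2.2
    omega

theorem fkm_zero_one (m : ℕ) (b : ℕ → ℕ) : fkm m b 0 1 = b 0 := by
  have hempty : fkmCells m ∅ 1 = 0 := fkmCells_eq_zero (by simp)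
  rw [fkm_eq_fkmCells, cells0_zero, ← empty_union (Icc 1 (b 0) ×ˢ {0}),
    fkmCells_union_column m (by simp) (by simp), hempty, fkmCells_zero]
  simp

theorem fkm_zero (m : ℕ) (b : ℕ → ℕ) (n : ℕ) : fkm m b n 0 = 1 :=
  fkmCells_zero m _

/-- The root vector `ω_m(B)`. -/
def rootVec (m : ℕ) (b : ℕ → ℕ) (j : ℕ) : ℤ := m * j - b j

/-- The `m`-weight Factorization Theorem. -/
theorem sum_fkm_mul_fallFact (m : ℕ) {b : ℕ → ℕ} {n : ℕ} (hb : MonotoneOn b (Set.Iic n))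
    (x : ℤ) :
    ∑ p ∈ antidiagonal (n + 1), fkm m b n p.1 * fallFact x p.2 m =
      ∏ j ∈ range (n + 1), (x - rootVec m b j) := by
  induction n with
  | zero =>
    simp [Nat.sum_antidiagonal_succ, fkm_zero, fkm_zero_one, fallFact, rootVec]
  | succ n ih =>
    set f := fkm m b n
    set F := fun j => fallFact x j m
    have hstep : ∀ p ∈ antidiagonal (n + 1), f p.1 * F p.2 * (x - rootVec m b (n + 1)) =
        f p.1 * F (p.2 + 1) + (b (n + 1) - m * p.1) * f p.1 * F p.2 := by
      intro p hp
      have hp : (p.1 : ℤ) + p.2 = n + 1 := by exact_mod_cast mem_antidiagonal.1 hp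
      simp only [F, fallFact_succ, rootVec]
      push_cast
      linear_combination (↑m : ℤ) * f p.1 * fallFact x p.2 m * hp
    have hshift : ∑ p ∈ antidiagonal (n + 1), f p.1 * F (p.2 + 1) =
        F (n + 2) + ∑ p ∈ antidiagonal (n + 1), f (p.1 + 1) * F p.2 := by
      have h₁ := Nat.sum_antidiagonal_succ' (f := fun p => f p.1 * F p.2) (n := n + 1)
      have h₂ := Nat.sum_antidiagonal_succ (f := fun p => f p.1 * F p.2) (n := n + 1)
      simp only [f, fkm_eq_zero m b (show n + 1 < n + 1 + 1 by omega), fkm_zero] at h₁ h₂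
      linear_combination h₂ - h₁
    rw [prod_range_succ, ← ih (hb.mono (Set.Iic_subset_Iic.2 (Nat.le_succ n))), sum_mul,
      sum_congr rfl hstep, sum_add_distrib, hshift, Nat.sum_antidiagonal_succ]
    simp only [fkm_zero, one_mul, fkm_succ_succ m hb, add_mul, sum_add_distrib]
    ring

theorem fallFact_mul_eq_zero {m t j : ℕ} (h : t < j) : fallFact (m * t) j m = 0 :=
  prod_eq_zero (mem_range.2 h) (sub_self _)

theorem fallFact_mul_self_ne_zero {m : ℕ} (hm : 0 < m) (t : ℕ) : fallFact (m * t) t m ≠ 0 := by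
  refine prod_ne_zero_iff.2 fun i hi => ?_
  have : (i : ℤ) < t := by exact_mod_cast mem_range.1 hi
  rw [← mul_sub]
  exact mul_ne_zero (by exact_mod_cast hm.ne') (by omega)

/-- Evaluating at `x = m t` kills `x↓_{j,m}` for `j > t` but not `x↓_{t,m}`. -/
theorem eq_of_sum_mul_fallFact_eq {m K : ℕ} (hm : 0 < m) {a c : ℕ → ℤ}
    (h : ∀ x, ∑ p ∈ antidiagonal K, a p.1 * fallFact x p.2 m =
      ∑ p ∈ antidiagonal K, c p.1 * fallFact x p.2 m) :
    ∀ i ≤ K, a i = c i := by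
  have hd : ∀ x, ∑ p ∈ antidiagonal K, (a p.1 - c p.1) * fallFact x p.2 m = 0 := fun x => by
    simp only [sub_mul, sum_sub_distrib, h x, sub_self]
  suffices ∀ t ≤ K, a (K - t) - c (K - t) = 0 by
    intro i hi
    simpa [Nat.sub_sub_self hi, sub_eq_zero] using this (K - i) (Nat.sub_le K i)
  intro t
  induction t using Nat.strong_induction_on with
  | _ t ih =>
    intro ht
    have hx := hd (m * t)
    rw [sum_eq_single_of_mem (K - t, t) (mem_antidiagonal.2 (Nat.sub_add_cancel ht))] at hx
    · exact (mul_eq_zero.1 hx).resolve_right (fallFact_mul_self_ne_zero hm t)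
    · rintro ⟨i, j⟩ hij hne
      have hij : i + j = K := mem_antidiagonal.1 hij
      rcases lt_trichotomy j t with hlt | rfl | hgt
      · rw [show i = K - j by omega, ih j hlt (by omega), zero_mul]
      · exact absurd (Prod.ext (show i = K - j by omega) rfl : (i, j) = (K - j, j)) hne
      · rw [fallFact_mul_eq_zero hgt, mul_zero]

theorem fkm_eq_iff_prod_eq {m n : ℕ} (hm : 0 < m) {b b' : ℕ → ℕ}
    (hb : MonotoneOn b (Set.Iic n)) (hb' : MonotoneOn b' (Set.Iic n)) :
    (∀ k, fkm m b n k = fkm m b' n k) ↔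
      ∀ x, ∏ j ∈ range (n + 1), (x - rootVec m b j) =
        ∏ j ∈ range (n + 1), (x - rootVec m b' j) := by
  constructor
  · intro h x
    simp only [← sum_fkm_mul_fallFact m hb, ← sum_fkm_mul_fallFact m hb', h]
  · intro h k
    rcases le_or_gt k (n + 1) with hk | hk
    · refine eq_of_sum_mul_fallFact_eq hm (fun x => ?_) k hk
      rw [sum_fkm_mul_fallFact m hb, sum_fkm_mul_fallFact m hb', h]
    · rw [fkm_eq_zero m b hk, fkm_eq_zero m b' hk]

theorem prod_sub_eq_iff {R ι : Type*} [CommRing R] [IsDomain R] [Infinite R] (s : Finset ι)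
    (u v : ι → R) :
    (∀ x, ∏ j ∈ s, (x - u j) = ∏ j ∈ s, (x - v j)) ↔ s.val.map u = s.val.map v := by
  have hpoly : ∀ w : ι → R, ∏ j ∈ s, (Polynomial.X - Polynomial.C (w j)) =
      ((s.val.map w).map fun a => Polynomial.X - Polynomial.C a).prod := fun w => by
    rw [Multiset.map_map]
    rfl
  constructor
  · intro h
    have : ∏ j ∈ s, (Polynomial.X - Polynomial.C (u j)) =
        ∏ j ∈ s, (Polynomial.X - Polynomial.C (v j)) :=
      Polynomial.funext fun x => by simpa [Polynomial.eval_prod] using h x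
    simpa only [hpoly, Polynomial.roots_multiset_prod_X_sub_C] using congrArg Polynomial.roots this
  · intro h x
    have := congrArg (fun t => (t.map (x - ·)).prod) h
    simp only [Multiset.map_map, Function.comp_def] at this
    simpa only [prod_eq_multiset_prod] using this

theorem fkm_eq_iff_map_rootVec_eq {m n : ℕ} (hm : 0 < m) {b b' : ℕ → ℕ}
    (hb : MonotoneOn b (Set.Iic n)) (hb' : MonotoneOn b' (Set.Iic n)) :
    (∀ k, fkm m b n k = fkm m b' n k) ↔
      (range (n + 1)).val.map (rootVec m b) = (range (n + 1)).val.map (rootVec m b') :=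
  (fkm_eq_iff_prod_eq hm hb hb').trans (prod_sub_eq_iff _ _ _)

def colShift (d : ℕ) : ℕ × ℕ ↪ ℕ × ℕ :=
  (Function.Embedding.refl ℕ).prodMap (addRightEmbedding d)

@[simp]
theorem colShift_apply (d : ℕ) (p : ℕ × ℕ) : colShift d p = (p.1, p.2 + d) := rfl

theorem placements_map_colShift (C : Finset (ℕ × ℕ)) (d k : ℕ) :
    placements (C.map (colShift d)) k =
      (placements C k).map (mapEmbedding (colShift d)).toEmbedding := by
  ext G
  simp only [mem_map, RelEmbedding.coe_toEmbedding, mapEmbedding_apply, mem_placements]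
  constructor
  · rintro ⟨hGC, hinj, rfl⟩
    obtain ⟨F, hFC, rfl⟩ := subset_map_iff.1 hGC
    refine ⟨F, ⟨hFC, fun p hp q hq hpq => ?_, (card_map _).symm⟩, rfl⟩
    exact (colShift d).injective (hinj (by simpa using hp) (by simpa using hq) (by simpa using hpq))
  · rintro ⟨F, ⟨hFC, hinj, rfl⟩, rfl⟩
    refine ⟨map_subset_map.2 hFC, ?_, card_map _⟩
    rw [coe_map]
    rintro _ ⟨p, hp, rfl⟩ _ ⟨q, hq, rfl⟩ hpq
    rw [hinj hp hq (by simpa using hpq)]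

theorem wtm_map_colShift (m d : ℕ) (F : Finset (ℕ × ℕ)) :
    wtm m (F.map (colShift d)) = wtm m F := by
  simp only [wtm, filter_map, card_map]
  rw [map_eq_image, image_image]
  rfl

theorem fkmCells_map_colShift (m : ℕ) (C : Finset (ℕ × ℕ)) (d k : ℕ) :
    fkmCells m (C.map (colShift d)) k = fkmCells m C k := by
  simp only [fkmCells, placements_map_colShift, sum_map, RelEmbedding.coe_toEmbedding,
    mapEmbedding_apply, wtm_map_colShift]

theorem cells0_eq_map_colShift {b c : ℕ → ℕ} {n d : ℕ} (hshift : ∀ j ≤ n, c (j + d) = b j)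
    (hzero : ∀ j < d, c j = 0) : cells0 c (n + d) = (cells0 b n).map (colShift d) := by
  ext ⟨r, col⟩
  simp only [mem_map, mem_cells0, colShift_apply, Prod.exists, Prod.mk.injEq]
  constructor
  · rintro ⟨h1, h2, h3⟩
    have hd : d ≤ col := by
      by_contra! hlt
      have := hzero col hlt
      omega
    refine ⟨r, col - d, ⟨h1, ?_, by omega⟩, rfl, by omega⟩
    rwa [← hshift _ (by omega), Nat.sub_add_cancel hd]
  · rintro ⟨r, j, ⟨h1, h2, h3⟩, rfl, rfl⟩
    exact ⟨h1, (hshift j h3).symm ▸ h2, by omega⟩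

theorem fkm_eq_of_colShift (m : ℕ) {b c : ℕ → ℕ} {n d : ℕ} (hshift : ∀ j ≤ n, c (j + d) = b j)
    (hzero : ∀ j < d, c j = 0) (k : ℕ) : fkm m c (n + d) k = fkm m b n k := by
  rw [fkm_eq_fkmCells, cells0_eq_map_colShift hshift hzero, fkmCells_map_colShift]
  rfl

section Padding

variable {b : ℕ → ℕ} {n : ℕ}

theorem add_sub_le_sum_of_monotoneOn (hb : MonotoneOn b (Set.Iic n)) {i : ℕ} (hi : i ≤ n)
    (hpos : 0 < b i) :
    b i + (n - i) ≤ ∑ j ∈ range (n + 1), b j := by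
  have hIcc : ∑ j ∈ Icc i n, b i ≤ ∑ j ∈ Icc i n, b j :=
    sum_le_sum fun j hj => hb hi (mem_Icc.1 hj).2 (mem_Icc.1 hj).1
  have hsub : ∑ j ∈ Icc i n, b j ≤ ∑ j ∈ range (n + 1), b j :=
    sum_le_sum_of_subset fun j hj => mem_range_succ_iff.2 (mem_Icc.1 hj).2
  rw [sum_const, Nat.card_Icc, smul_eq_mul, show n + 1 - i = n - i + 1 by omega] at hIcc
  nlinarith

/-- The witness is `B` right-aligned in the columns `0, …, N`: zero columns are added on the left,
or, if `N < n`, leading zero columns are dropped. -/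
theorem exists_padding (m : ℕ) (hb : MonotoneOn b (Set.Iic n)) {N : ℕ}
    (hN : N = ∑ j ∈ range (n + 1), b j) :
    ∃ c : ℕ → ℕ, MonotoneOn c (Set.Iic N) ∧ (∀ j ≤ N, c j ≤ j) ∧
      ∀ k, fkm m c N k = fkm m b n k := by
  have hzero : ∀ i ≤ n, i + N < n → b i = 0 := fun i hi hiN => by
    by_contra! hpos
    have := add_sub_le_sum_of_monotoneOn hb hi (Nat.pos_of_ne_zero hpos)
    omega
  set c : ℕ → ℕ := fun j => if N ≤ j + n then b (j + n - N) else 0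
  have hc_of_le : ∀ j, N ≤ j + n → c j = b (j + n - N) := fun j h => if_pos h
  have hc_of_lt : ∀ j, j + n < N → c j = 0 := fun j h => if_neg (by omega)
  refine ⟨c, fun j hj k hk hjk => ?_, fun j hj => ?_, fun k => ?_⟩
  · simp only [Set.mem_Iic] at hj hk
    rcases lt_or_ge (j + n) N with hjN | hjN
    · simp [hc_of_lt j hjN]
    · rw [hc_of_le j hjN, hc_of_le k (by omega)]
      exact hb (Set.mem_Iic.2 (by omega)) (Set.mem_Iic.2 (by omega)) (by omega)
  · rcases lt_or_ge (j + n) N with hjN | hjN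
    · simp [hc_of_lt j hjN]
    · rw [hc_of_le j hjN]
      rcases Nat.eq_zero_or_pos (b (j + n - N)) with h0 | hpos
      · omega
      · have := add_sub_le_sum_of_monotoneOn hb (by omega) hpos
        omega
  · rcases le_or_gt n N with hnN | hNn
    · have := fkm_eq_of_colShift m (b := b) (n := n) (d := N - n) (c := c)
        (fun j _ => (hc_of_le _ (by omega)).trans (congrArg b (by omega)))
        (fun j hj => hc_of_lt j (by omega)) k
      rwa [Nat.add_sub_cancel' hnN] at this
    · have := fkm_eq_of_colShift m (b := c) (n := N) (d := n - N) (c := b)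
        (fun j _ => ((hc_of_le j (by omega)).trans (congrArg b (by omega))).symm)
        (fun j hj => hzero j (by omega) (by omega)) k
      rw [Nat.add_sub_cancel' hNn.le] at this
      exact this.symm

end Padding

theorem map_range_val_eq_ofFn {α : Type*} (f : ℕ → α) (n : ℕ) :
    (range n).val.map f = (List.ofFn fun i : Fin n => f i : Multiset α) := by
  rw [List.ofFn_eq_map, show (fun i : Fin n => f i) = f ∘ Fin.val from rfl, ← List.map_map,
    List.map_coe_finRange_eq_range]
  rfl

theorem eq_of_map_range_eq {α : Type*} [LinearOrder α] {u v : ℕ → α} {N : ℕ}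
    (hu : MonotoneOn u (Set.Iic N)) (hv : MonotoneOn v (Set.Iic N))
    (h : (range (N + 1)).val.map u = (range (N + 1)).val.map v) : ∀ j ≤ N, u j = v j := by
  have hsorted : ∀ w : ℕ → α, MonotoneOn w (Set.Iic N) →
      (List.ofFn fun i : Fin (N + 1) => w i).Pairwise (· ≤ ·) := fun w hw =>
    List.pairwise_ofFn.2 fun i j hij =>
      hw (Set.mem_Iic.2 (Nat.lt_succ_iff.1 i.2)) (Set.mem_Iic.2 (Nat.lt_succ_iff.1 j.2)) hij.le
  rw [map_range_val_eq_ofFn, map_range_val_eq_ofFn, Multiset.coe_eq_coe] at h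
  have := List.ofFn_injective (h.eq_of_pairwise' (hsorted u hu) (hsorted v hv))
  intro j hj
  exact congrFun this ⟨j, Nat.lt_succ_of_le hj⟩

theorem monotoneOn_Iic_of_le_succ {α : Type*} [Preorder α] {f : ℕ → α} {N : ℕ}
    (hf : ∀ j < N, f j ≤ f (j + 1)) : MonotoneOn f (Set.Iic N) :=
  monotoneOn_of_le_succ Set.ordConnected_Iic fun j _ _ hj => by
    simpa [Order.succ_eq_add_one] using hf j (by simpa [Order.succ_eq_add_one] using hj)

/-- If the sorted values had a gap larger than `m`, the walk `v 0, v 1, …`, which starts below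
the gap and moves up by at most `m` per step, could never reach the values above it. -/
theorem sort_succ_le_add {N : ℕ} (v : Fin (N + 1) → ℤ) {m : ℤ} (hm : 0 ≤ m)
    (hmin : ∀ k, v 0 ≤ v k) (hstep : ∀ k : Fin N, v k.succ ≤ v k.castSucc + m) (i : Fin N) :
    v (Tuple.sort v i.succ) ≤ v (Tuple.sort v i.castSucc) + m := by
  set π := Tuple.sort v
  have hmono : Monotone (v ∘ π) := Tuple.monotone_sort v
  by_contra! hgap
  have hbelow : ∀ k, v k ≤ v (π i.castSucc) := by
    intro k
    induction k using Fin.induction with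
    | zero => exact hmin _
    | succ k ih =>
      obtain ⟨l, hl⟩ := π.surjective k.succ
      rcases le_or_gt l i.castSucc with hli | hil
      · exact hl ▸ hmono hli
      · have : v (π i.succ) ≤ v k.succ := hl ▸ hmono (Fin.castSucc_lt_iff_succ_le.1 hil)
        have := hstep k
        omega
  have := hbelow (π i.succ)
  omega

theorem exists_rearrangement_succ_le_add {ω : ℕ → ℤ} {N : ℕ} {m : ℤ} (hm : 0 ≤ m)
    (hmin : ∀ j ≤ N, ω 0 ≤ ω j) (hstep : ∀ j < N, ω (j + 1) ≤ ω j + m) :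
    ∃ σ : ℕ → ℤ, σ 0 = ω 0 ∧ (∀ j < N, σ j ≤ σ (j + 1) ∧ σ (j + 1) ≤ σ j + m) ∧
      (range (N + 1)).val.map σ = (range (N + 1)).val.map ω := by
  set v : Fin (N + 1) → ℤ := fun i => ω i
  set π := Tuple.sort v
  have hmono : Monotone (v ∘ π) := Tuple.monotone_sort v
  refine ⟨fun j => if h : j < N + 1 then v (π ⟨j, h⟩) else 0, ?_, fun j hj => ?_, ?_⟩
  · have h₁ : v (π 0) ≤ v 0 := by simpa using hmono (Fin.zero_le (π.symm 0))
    have h₂ : v 0 ≤ v (π 0) := hmin _ (Nat.lt_succ_iff.1 (π 0).2)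
    exact (dif_pos N.succ_pos).trans (le_antisymm h₁ h₂)
  · simp only [dif_pos (Nat.lt_succ_of_lt hj), dif_pos (Nat.succ_lt_succ hj)]
    have hmin' : ∀ k, v 0 ≤ v k := fun k => hmin k (Nat.lt_succ_iff.1 k.2)
    exact ⟨hmono (Fin.mk_le_mk.2 j.le_succ),
      sort_succ_le_add v hm hmin' (fun k => hstep k k.2) ⟨j, hj⟩⟩
  · rw [map_range_val_eq_ofFn, map_range_val_eq_ofFn, Multiset.coe_eq_coe]
    have hσ : (fun i : Fin (N + 1) => if h : (i : ℕ) < N + 1 then v (π ⟨i, h⟩) else 0) = v ∘ π :=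
      funext fun i => dif_pos i.2
    rw [hσ]
    exact π.ofFn_comp_perm v

theorem rootVec_monotoneOn {m : ℕ} {b : ℕ → ℕ} {N : ℕ} (hb : ∀ j < N, b (j + 1) ≤ b j + m) :
    MonotoneOn (rootVec m b) (Set.Iic N) :=
  monotoneOn_Iic_of_le_succ fun j hj => by
    have := hb j hj
    simp only [rootVec, Nat.cast_add, Nat.cast_one, mul_add, mul_one]
    omega

theorem exists_restricted_of_le {m : ℕ} (hm : 0 < m) {c : ℕ → ℕ} {N : ℕ}
    (hc : MonotoneOn c (Set.Iic N)) (hle : ∀ j ≤ N, c j ≤ j) :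
    ∃ b' : ℕ → ℕ, b' 0 = 0 ∧ MonotoneOn b' (Set.Iic N) ∧ (∀ j < N, b' (j + 1) ≤ b' j + m) ∧
      (range (N + 1)).val.map (rootVec m b') = (range (N + 1)).val.map (rootVec m c) := by
  have hc0 : c 0 = 0 := Nat.le_zero.1 (hle 0 (Nat.zero_le N))
  have hmin : ∀ j ≤ N, rootVec m c 0 ≤ rootVec m c j := fun j hj => by
    have hcj : (c j : ℤ) ≤ j := by exact_mod_cast hle j hj
    have hjm : (j : ℤ) ≤ m * j :=
      le_mul_of_one_le_left (Int.natCast_nonneg j) (by exact_mod_cast hm)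
    simp only [rootVec, hc0]
    push_cast
    linarith
  have hstep : ∀ j < N, rootVec m c (j + 1) ≤ rootVec m c j + m := fun j hj => by
    have := hc (Set.mem_Iic.2 hj.le) (Set.mem_Iic.2 (show j + 1 ≤ N from hj))
      (Nat.le_add_right j 1)
    simp only [rootVec, Nat.cast_add, Nat.cast_one, mul_add, mul_one]
    omega
  obtain ⟨σ, hσ0, hσ, hσc⟩ := exists_rearrangement_succ_le_add (Int.natCast_nonneg m) hmin hstep
  have hσ0' : σ 0 = 0 := by simpa [rootVec, hc0] using hσ0
  have hσle : ∀ j ≤ N, σ j ≤ m * j := by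
    intro j hj
    induction j with
    | zero => simp [hσ0']
    | succ j ih =>
      have := (hσ j hj).2
      have := ih (by omega)
      push_cast
      linarith
  set b' : ℕ → ℕ := fun j => (m * j - σ j).toNat
  have hcast : ∀ j ≤ N, (b' j : ℤ) = m * j - σ j := fun j hj =>
    Int.toNat_of_nonneg (sub_nonneg.2 (hσle j hj))
  refine ⟨b', by simp [b', hσ0'], monotoneOn_Iic_of_le_succ fun j hj => ?_, fun j hj => ?_, ?_⟩
  · have := (hσ j hj).2
    suffices (b' j : ℤ) ≤ b' (j + 1) by exact_mod_cast this
    rw [hcast j hj.le, hcast (j + 1) hj]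
    push_cast
    linarith
  · have := (hσ j hj).1
    suffices (b' (j + 1) : ℤ) ≤ b' j + m by exact_mod_cast this
    rw [hcast j hj.le, hcast (j + 1) hj]
    push_cast
    linarith
  · rw [← hσc]
    refine Multiset.map_congr rfl fun j hj => ?_
    rw [rootVec, hcast j (Nat.lt_succ_iff.1 (mem_range.1 hj))]
    ring

theorem unique_m_restricted_representative_general (m n N : ℕ) (hm : 0 < m) (b : ℕ → ℕ)
    (hmono : ∀ j k, j ≤ k → k ≤ n → b j ≤ b k)
    (hN : N = ∑ j ∈ Finset.range (n + 1), b j) :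
    ∃ b' : ℕ → ℕ,
      (b' 0 = 0 ∧ (∀ j k, j ≤ k → k ≤ N → b' j ≤ b' k) ∧
        (∀ j < N, b' (j + 1) ≤ b' j + m) ∧
        (∀ k, fkm m b' N k = fkm m b n k)) ∧
      ∀ b'' : ℕ → ℕ,
        (b'' 0 = 0 ∧ (∀ j k, j ≤ k → k ≤ N → b'' j ≤ b'' k) ∧
          (∀ j < N, b'' (j + 1) ≤ b'' j + m) ∧
          (∀ k, fkm m b'' N k = fkm m b n k)) →
        ∀ j ≤ N, b'' j = b' j := by
  have hb : MonotoneOn b (Set.Iic n) := fun j _ k hk hjk => hmono j k hjk hk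
  obtain ⟨c, hc, hcle, hcfkm⟩ := exists_padding m hb hN
  obtain ⟨b', hb'0, hb', hb'res, hroots⟩ := exists_restricted_of_le hm hc hcle
  have hb'fkm : ∀ k, fkm m b' N k = fkm m b n k := fun k =>
    ((fkm_eq_iff_map_rootVec_eq hm hb' hc).2 hroots k).trans (hcfkm k)
  refine ⟨b', ⟨hb'0, fun j k hjk hk => hb' (hjk.trans hk) hk hjk, hb'res, hb'fkm⟩, ?_⟩
  rintro b'' ⟨-, hb''mono, hb''res, hb''fkm⟩ j hj
  have hb'' : MonotoneOn b'' (Set.Iic N) := fun i _ k hk hik => hb''mono i k hik hk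
  have hroots'' := (fkm_eq_iff_map_rootVec_eq hm hb'' hb').1 fun k =>
    (hb''fkm k).trans (hb'fkm k).symm
  have := eq_of_map_range_eq (rootVec_monotoneOn hb''res) (rootVec_monotoneOn hb'res) hroots'' j hj
  simpa [rootVec] using this

/-- Theorem 7.3: every Ferrers board `B = (b_0,…,b_n)` with `b_0 = 0` is `m`-weight
file equivalent to a unique `m`-restricted board (given here padded to
`N = |B|` columns, i.e. indices `0,…,N`); equivalently, the weakly increasing
rearrangement of `ω_m(B)` is the `m`-weight root vector of an `m`-restricted board. -/
theorem unique_m_restricted_representative (m n N : ℕ) (hm : 0 < m) (b : ℕ → ℕ)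
    (hb0 : b 0 = 0) (hmono : ∀ j k, j ≤ k → k ≤ n → b j ≤ b k)
    (hN : N = ∑ j ∈ Finset.range (n + 1), b j) :
    ∃ b' : ℕ → ℕ,
      (b' 0 = 0 ∧ (∀ j k, j ≤ k → k ≤ N → b' j ≤ b' k) ∧
        (∀ j < N, b' (j + 1) ≤ b' j + m) ∧
        (∀ k, fkm m b' N k = fkm m b n k)) ∧
      ∀ b'' : ℕ → ℕ,
        (b'' 0 = 0 ∧ (∀ j k, j ≤ k → k ≤ N → b'' j ≤ b'' k) ∧
          (∀ j < N, b'' (j + 1) ≤ b'' j + m) ∧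
          (∀ k, fkm m b'' N k = fkm m b n k)) →
        ∀ j ≤ N, b'' j = b' j :=
  unique_m_restricted_representative_general m n N hm b hmono hN
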